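/- Fix d ≥ 1 and Δ > 0 with (d+7)^{1+Δ} < d+8. Suppose a sequence p_k ∈ [0,1] satisfies p_{k+1} ≤ L_{k+1}^A (p_k^{d+8} + e^{−c L_k^δ}) for constants A, c, δ > 0, where L_{k+1} = L_k^{d+7}. Then there exists ℓ₁ such that if L_0 ≥ ℓ₁ and p_0 ≤ exp(−(log L_0)^{1+Δ}), then p_k ≤ exp(−(log L_k)^{1+Δ}) for all k ≥ 0. -/

import Mathlib

/-! Passing to the scale `L^{d+7}` multiplies `(log L)^{1+Δ}` by `(d+7)^{1+Δ}`, while raising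
`p ≤ exp(-(log L)^{1+Δ})` to the power `d+8` multiplies the exponent by `d+8`. The surplus
`(d+8 - (d+7)^{1+Δ}) (log L)^{1+Δ}` beats the polynomial loss `L^{A(d+7)}`, and `exp(-c L^δ)`
beats everything, once `L` is large; as the scales only grow, one threshold `ℓ₁` serves
every induction step. -/

open Real Filter Topology

lemma tendsto_mul_sub_mul_rpow_atBot {a ε s : ℝ} (hε : 0 < ε) (hs : 1 < s) :
    Tendsto (fun y : ℝ => a * y - ε * y ^ s) atTop atBot := by
  have hfactor : Tendsto (fun y : ℝ => a - ε * y ^ (s - 1)) atTop atBot :=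
    tendsto_atBot_add_const_left _ a <| tendsto_neg_atTop_atBot.comp <|
      (tendsto_rpow_atTop (sub_pos.mpr hs)).const_mul_atTop hε
  refine (tendsto_id.atTop_mul_atBot₀ hfactor).congr' ?_
  filter_upwards [eventually_gt_atTop 0] with y hy
  rw [id, mul_sub, ← mul_assoc, mul_comm y ε, mul_assoc, ← rpow_one_add' hy.le (by linarith)]
  ring_nf

lemma tendsto_mul_add_mul_rpow_sub_mul_exp_atBot {a C c δ s : ℝ} (hc : 0 < c) (hδ : 0 < δ) :
    Tendsto (fun y : ℝ => a * y + C * y ^ s - c * exp (δ * y)) atTop atBot := by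
  have hsmall : Tendsto (fun y : ℝ => (a * y + C * y ^ s) * exp (-δ * y)) atTop (𝓝 0) := by
    have h := ((tendsto_rpow_mul_exp_neg_mul_atTop_nhds_zero 1 δ hδ).const_mul a).add
      ((tendsto_rpow_mul_exp_neg_mul_atTop_nhds_zero s δ hδ).const_mul C)
    simp only [rpow_one, mul_zero, add_zero] at h
    exact h.congr fun y => by ring
  have hprod := (tendsto_exp_atTop.comp (tendsto_id.const_mul_atTop hδ)).atTop_mul_neg
    (neg_lt_zero.mpr hc) (by simpa using hsmall.sub_const c)
  refine hprod.congr fun y => ?_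
  have hinv : exp (δ * y) * exp (-(δ * y)) = 1 := by rw [← exp_add, add_neg_cancel, exp_zero]
  simp only [Function.comp, id]
  linear_combination (a * y + C * y ^ s) * hinv

lemma tendsto_multiscale_loss_nhds_zero {a C n c δ s : ℝ} (hCn : C < n) (hs : 1 < s)
    (hc : 0 < c) (hδ : 0 < δ) :
    Tendsto (fun L : ℝ => L ^ a * exp (C * log L ^ s) *
      (exp (-(n * log L ^ s)) + exp (-(c * L ^ δ)))) atTop (𝓝 0) := by
  have hlog : Tendsto (fun y : ℝ => exp (a * y - (n - C) * y ^ s) +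
      exp (a * y + C * y ^ s - c * exp (δ * y))) atTop (𝓝 0) := by
    simpa using (tendsto_exp_atBot.comp (tendsto_mul_sub_mul_rpow_atBot (sub_pos.mpr hCn) hs)).add
      (tendsto_exp_atBot.comp (tendsto_mul_add_mul_rpow_sub_mul_exp_atBot hc hδ))
  refine (hlog.comp tendsto_log_atTop).congr' ?_
  filter_upwards [eventually_gt_atTop 0] with L hL
  simp only [Function.comp, rpow_def_of_pos hL, mul_add, ← exp_add]
  congr 2
  · ring
  · rw [mul_comm δ]; ring

lemma multiscale_step {m n : ℕ} {s A c δ L p q : ℝ} (hL : 1 ≤ L) (hp₀ : 0 ≤ p)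
    (hp : p ≤ exp (-(log L ^ s)))
    (hq : q ≤ (L ^ m) ^ A * (p ^ n + exp (-(c * L ^ δ))))
    (hloss : L ^ (A * m) * exp ((m : ℝ) ^ s * log L ^ s) *
      (exp (-(n * log L ^ s)) + exp (-(c * L ^ δ))) ≤ 1) :
    q ≤ exp (-(log (L ^ m) ^ s)) := by
  set X := log L ^ s
  have hpow : p ^ n ≤ exp (-(n * X)) := by
    calc p ^ n ≤ exp (-X) ^ n := pow_le_pow_left₀ hp₀ hp n
      _ = exp (-(n * X)) := by rw [← exp_nat_mul]; ring_nf
  have hlogm : log (L ^ m) ^ s = (m : ℝ) ^ s * X := by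
    rw [log_pow, mul_rpow (Nat.cast_nonneg m) (log_nonneg hL)]
  have hLm : (L ^ m) ^ A = L ^ (A * m) := by
    rw [mul_comm, rpow_natCast_mul (by linarith)]
  calc q ≤ L ^ (A * m) * (exp (-(n * X)) + exp (-(c * L ^ δ))) := by
        rw [← hLm]; refine hq.trans (mul_le_mul_of_nonneg_left ?_ (by positivity)); linarith
    _ = exp (-((m : ℝ) ^ s * X)) * (L ^ (A * m) * exp ((m : ℝ) ^ s * X) *
          (exp (-(n * X)) + exp (-(c * L ^ δ)))) := by
        rw [show exp (-((m : ℝ) ^ s * X)) = (exp ((m : ℝ) ^ s * X))⁻¹ from exp_neg _]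
        field_simp
    _ ≤ exp (-((m : ℝ) ^ s * X)) := mul_le_of_le_one_right (exp_pos _).le hloss
    _ = exp (-(log (L ^ m) ^ s)) := by rw [hlogm]

theorem multiscale_induction_general (d : ℕ) (Δ A c δ : ℝ) (hΔ : 0 < Δ)
    (hcrit : ((d : ℝ) + 7) ^ ((1 : ℝ) + Δ) < (d : ℝ) + 8)
    (hc : 0 < c) (hδ : 0 < δ) :
    ∃ ℓ₁ : ℝ, ∀ L : ℕ → ℝ, 0 < L 0 → ℓ₁ ≤ L 0 →
      (∀ k, L (k + 1) = L k ^ (d + 7)) →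
      ∀ p : ℕ → ℝ, (∀ k, 0 ≤ p k ∧ p k ≤ 1) →
      (∀ k, p (k + 1) ≤ L (k + 1) ^ A * (p k ^ (d + 8) + Real.exp (-(c * L k ^ δ)))) →
      p 0 ≤ Real.exp (-(Real.log (L 0) ^ ((1 : ℝ) + Δ))) →
      ∀ k, p k ≤ Real.exp (-(Real.log (L k) ^ ((1 : ℝ) + Δ))) := by
  have hcrit' : (((d + 7 : ℕ) : ℝ)) ^ ((1 : ℝ) + Δ) < ((d + 8 : ℕ) : ℝ) := by
    push_cast; exact hcrit
  obtain ⟨ℓ, hℓ⟩ := eventually_atTop.mp <|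
    (tendsto_multiscale_loss_nhds_zero (a := A * (d + 7 : ℕ)) (s := 1 + Δ) hcrit' (by linarith) hc hδ).eventually
      (eventually_le_nhds one_pos)
  refine ⟨max ℓ 1, fun L _ hL₀ hLrec p hp hrec hp₀ => ?_⟩
  have hL : ∀ k, max ℓ 1 ≤ L k := by
    intro k
    induction k with
    | zero => exact hL₀
    | succ k ih =>
      rw [hLrec]
      exact ih.trans (le_self_pow₀ ((le_max_right _ _).trans ih) (by omega))
  intro k
  induction k with
  | zero => exact hp₀
  | succ k ih =>
    rw [hLrec]
    exact multiscale_step ((le_max_right _ _).trans (hL k)) (hp k).1 ih (hLrec k ▸ hrec k)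
      (hℓ _ ((le_max_left _ _).trans (hL k)))

/-- Multiscale induction: if `p_{k+1} ≤ L_{k+1}^A (p_k^{d+8} + e^{-c L_k^δ})` with
`L_{k+1} = L_k^{d+7}` and `(d+7)^{1+Δ} < d+8`, then there is `ℓ₁` such that whenever
`L₀ ≥ ℓ₁` and `p₀ ≤ exp(-(log L₀)^{1+Δ})`, we have `p_k ≤ exp(-(log L_k)^{1+Δ})` for all `k`. -/
theorem multiscale_induction (d : ℕ) (hd : 1 ≤ d) (Δ A c δ : ℝ) (hΔ : 0 < Δ)
    (hcrit : ((d : ℝ) + 7) ^ ((1 : ℝ) + Δ) < (d : ℝ) + 8)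
    (hA : 0 < A) (hc : 0 < c) (hδ : 0 < δ) :
    ∃ ℓ₁ : ℝ, ∀ L : ℕ → ℝ, 0 < L 0 → ℓ₁ ≤ L 0 →
      (∀ k, L (k + 1) = L k ^ (d + 7)) →
      ∀ p : ℕ → ℝ, (∀ k, 0 ≤ p k ∧ p k ≤ 1) →
      (∀ k, p (k + 1) ≤ L (k + 1) ^ A * (p k ^ (d + 8) + Real.exp (-(c * L k ^ δ)))) →
      p 0 ≤ Real.exp (-(Real.log (L 0) ^ ((1 : ℝ) + Δ))) →
      ∀ k, p k ≤ Real.exp (-(Real.log (L k) ^ ((1 : ℝ) + Δ))) :=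
  multiscale_induction_general d Δ A c δ hΔ hcrit hc hδ
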